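/- arXiv:2110.08896 — 7 statements merged into one kernel-verified Lean document; each statement's English description precedes it below -/
import Mathlib

section
/- Let n, m ≥ 1 and k ≥ m be integers, let T : ℝ^n → ℝ^n be any map, and let Q^{(k-m)}, …, Q^{(k)} ∈ ℝ^n be given. Set e_j = T Q^{(j)} − Q^{(j)} and δ_j = Q^{(j)} − Q^{(j−1)}. Let Δ ∈ ℝ^{n×m} be the matrix whose i-th column (i = 0,…,m−1) is δ_{k−i} and H ∈ ℝ^{n×m} the matrix whose i-th column is e_{k−i} − e_{k−i−1}, and assume HᵀH is invertible. Let τ = (HᵀH)^{-1} Hᵀ e_k ∈ ℝ^m, and let α ∈ ℝ^{m+1} be the unique vector with Σ_{i=0}^m α_i = 1 and τ_i = Σ_{j=0}^{m−i−1} α_j for i = 0,…,m−1. For any β ∈ ℝ define Q^{(k+1)} = (1−β)·Σ_{i=0}^m α_i Q^{(k−m+i)} + β·Σ_{i=0}^m α_i T Q^{(k−m+i)}. Then Q^{(k+1)} = Q^{(k)} − G e_k, where G = (Δ + β H)(HᵀH)^{-1} Hᵀ − β I. -/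
/-!
Summation by parts: for any sequence `x` and weights with `∑ αᵢ = 1`,
`∑ αᵢ x^{(k-m+i)} = x^{(k)} - ∑ₜ τₜ (x^{(k-t)} - x^{(k-t-1)})` with `τₜ = ∑_{j < m-t} αⱼ`.
Since `T Q = Q + e`, the update is `∑ αᵢ Q^{(k-m+i)} + β ∑ αᵢ e^{(k-m+i)}`; the identity for `Q`
and for `e` produces the corrections `Δ τ` and `H τ`, and `τ = (HᵀH)⁻¹ Hᵀ e_k` turns
`Δ τ + β (H τ - e_k)` into `G e_k`.
-/

open Matrix Finset

theorem sum_range_succ_smul_eq_smul_sub_sum_smul_sub {R M : Type*} [Ring R] [AddCommGroup M]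
    [Module R M] (α : ℕ → R) (x : ℕ → M) {m k : ℕ} (hk : m ≤ k) :
    ∑ i ∈ range (m + 1), α i • x (k - m + i)
      = (∑ i ∈ range (m + 1), α i) • x k
        - ∑ t ∈ range m, (∑ j ∈ range (m - t), α j) • (x (k - t) - x (k - t - 1)) := by
  have telescope : ∀ i ∈ range (m + 1),
      x (k - m + i) = x k - ∑ t ∈ range (m - i), (x (k - t) - x (k - t - 1)) := by
    intro i hi
    have := sum_range_sub' (fun t => x (k - t)) (m - i)
    simp only [Nat.sub_sub, Nat.sub_zero] at this ⊢
    rw [this, sub_sub_cancel]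
    congr 1
    simp only [mem_range] at hi
    omega
  have swap : ∑ i ∈ range (m + 1), ∑ t ∈ range (m - i), α i • (x (k - t) - x (k - t - 1))
      = ∑ t ∈ range m, ∑ i ∈ range (m - t), α i • (x (k - t) - x (k - t - 1)) :=
    sum_comm' fun i t => by simp only [mem_range]; omega
  calc ∑ i ∈ range (m + 1), α i • x (k - m + i)
      = ∑ i ∈ range (m + 1), (α i • x k
          - ∑ t ∈ range (m - i), α i • (x (k - t) - x (k - t - 1))) :=
        sum_congr rfl fun i hi => by rw [telescope i hi, smul_sub, smul_sum]
    _ = _ := by simp only [sum_sub_distrib, swap, sum_smul]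

theorem mulVec_eq_sum_range_smul {R : Type*} [CommSemiring R] {n m : ℕ}
    (A : Matrix (Fin n) (Fin m) R) (c : ℕ → Fin n → R) (hA : ∀ r i, A r i = c i r)
    (v : Fin m → R) (w : ℕ → R) (hv : ∀ i, v i = w i) :
    A *ᵥ v = ∑ t ∈ range m, w t • c t := by
  ext r
  simp only [mulVec, dotProduct, hA, hv, ← Fin.sum_univ_eq_sum_range, Finset.sum_apply,
    Pi.smul_apply, smul_eq_mul, mul_comm]

theorem stmt_0_general (n m k : ℕ) (hk : m ≤ k)
    (T : (Fin n → ℝ) → (Fin n → ℝ)) (Q : ℕ → Fin n → ℝ)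
    (e : ℕ → Fin n → ℝ) (he : ∀ j, e j = T (Q j) - Q j)
    (δ : ℕ → Fin n → ℝ) (hδ : ∀ j, δ j = Q j - Q (j - 1))
    (Δ H : Matrix (Fin n) (Fin m) ℝ)
    (hΔ : ∀ (r : Fin n) (i : Fin m), Δ r i = δ (k - i) r)
    (hH : ∀ (r : Fin n) (i : Fin m), H r i = (e (k - i) - e (k - i - 1)) r)
    (τ : Fin m → ℝ) (hτ : τ = (Hᵀ * H)⁻¹ *ᵥ (Hᵀ *ᵥ e k))
    (α : ℕ → ℝ) (hα : ∑ i ∈ Finset.range (m + 1), α i = 1)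
    (hτα : ∀ i : Fin m, τ i = ∑ j ∈ Finset.range (m - (i : ℕ)), α j)
    (β : ℝ) (Qnext : Fin n → ℝ)
    (hQnext : Qnext =
      (1 - β) • ∑ i ∈ Finset.range (m + 1), α i • Q (k - m + i)
        + β • ∑ i ∈ Finset.range (m + 1), α i • T (Q (k - m + i)))
    (G : Matrix (Fin n) (Fin n) ℝ)
    (hG : G = (Δ + β • H) * (Hᵀ * H)⁻¹ * Hᵀ - β • (1 : Matrix (Fin n) (Fin n) ℝ)) :
    Qnext = Q k - G *ᵥ e k := by
  have hGe : G *ᵥ e k = Δ *ᵥ τ + β • (H *ᵥ τ) - β • e k := by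
    rw [hG, sub_mulVec, ← mulVec_mulVec, ← mulVec_mulVec, ← hτ, add_mulVec, smul_mulVec,
      smul_mulVec, one_mulVec]
  have hΔτ := mulVec_eq_sum_range_smul Δ (fun t => Q (k - t) - Q (k - t - 1))
    (fun r i => by rw [hΔ, hδ, Nat.sub_sub]) τ (fun t => ∑ j ∈ range (m - t), α j) hτα
  have hHτ := mulVec_eq_sum_range_smul H (fun t => e (k - t) - e (k - t - 1)) hH τ (fun t => ∑ j ∈ range (m - t), α j) hτα
  have hT : ∀ j, T (Q j) = Q j + e j := fun j => by rw [he]; abel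
  simp only [hT, smul_add, sum_add_distrib] at hQnext
  rw [hQnext, hGe, hΔτ, hHτ, sum_range_succ_smul_eq_smul_sub_sum_smul_sub α Q hk,
    sum_range_succ_smul_eq_smul_sub_sum_smul_sub α e hk, hα, one_smul, one_smul]
  module

/-- **Proposition 1 (quasi-Newton form of damped Anderson acceleration).**
With residuals `e j = T (Q j) - Q j`, differences `δ j = Q j - Q (j-1)`,
`Δ` the matrix with columns `δ (k-i)` and `H` the matrix with columns
`e (k-i) - e (k-i-1)` (`i = 0,…,m-1`), `τ = (HᵀH)⁻¹ Hᵀ e_k`, and `α` the mixing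
coefficients determined by `τ`, the damped Anderson update equals the
quasi-Newton update `Q^{(k+1)} = Q^{(k)} - G e_k` with
`G = (Δ + β H)(HᵀH)⁻¹ Hᵀ - β I`. -/
theorem stmt_0 (n m k : ℕ) (hn : 1 ≤ n) (hm : 1 ≤ m) (hk : m ≤ k)
    (T : (Fin n → ℝ) → (Fin n → ℝ)) (Q : ℕ → Fin n → ℝ)
    (e : ℕ → Fin n → ℝ) (he : ∀ j, e j = T (Q j) - Q j)
    (δ : ℕ → Fin n → ℝ) (hδ : ∀ j, δ j = Q j - Q (j - 1))
    (Δ H : Matrix (Fin n) (Fin m) ℝ)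
    (hΔ : ∀ (r : Fin n) (i : Fin m), Δ r i = δ (k - i) r)
    (hH : ∀ (r : Fin n) (i : Fin m), H r i = (e (k - i) - e (k - i - 1)) r)
    (hinv : IsUnit (Hᵀ * H))
    (τ : Fin m → ℝ) (hτ : τ = (Hᵀ * H)⁻¹ *ᵥ (Hᵀ *ᵥ e k))
    (α : ℕ → ℝ) (hα : ∑ i ∈ Finset.range (m + 1), α i = 1)
    (hτα : ∀ i : Fin m, τ i = ∑ j ∈ Finset.range (m - (i : ℕ)), α j)
    (β : ℝ) (Qnext : Fin n → ℝ)
    (hQnext : Qnext =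
      (1 - β) • ∑ i ∈ Finset.range (m + 1), α i • Q (k - m + i)
        + β • ∑ i ∈ Finset.range (m + 1), α i • T (Q (k - m + i)))
    (G : Matrix (Fin n) (Fin n) ℝ)
    (hG : G = (Δ + β • H) * (Hᵀ * H)⁻¹ * Hᵀ - β • (1 : Matrix (Fin n) (Fin n) ℝ)) :
    Qnext = Q k - G *ᵥ e k :=
  stmt_0_general n m k hk T Q e he δ hδ Δ H hΔ hH τ hτ α hα hτα β Qnext hQnext G hG
end

section
/- Let n, m ≥ 1, c₁, c₂ ≥ 0, and let T : ℝ^n → ℝ^n be twice continuously differentiable with ‖DT(x)‖ ≤ c₁ and ‖D²T(x)‖ ≤ c₂ for all x ∈ ℝ^n (operator norms induced by the sup norm ‖·‖_∞). Let Q : ℕ → ℝ^n satisfy, for every j ≥ m, Q^{(j+1)} = (1−β_j)·Σ_{i=0}^m α_i^{(j)} Q^{(j−m+i)} + β_j·Σ_{i=0}^m α_i^{(j)} T Q^{(j−m+i)}, where Σ_{i=0}^m α_i^{(j)} = 1 and 0 ≤ β_j ≤ 1. Fix k ≥ m+1, set e_j = T Q^{(j)} − Q^{(j)}, δ_j = Q^{(j)}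 − Q^{(j−1)}, τ_i = Σ_{l=0}^{m−i} α_l^{(k−1)} for i = 1,…,m, and let θ_k ≥ 0 satisfy ‖Σ_{i=0}^m α_i^{(k−1)} e_{k−1−m+i}‖_∞ = θ_k·‖e_{k−1}‖_∞. Then ‖e_k‖_∞ ≤ θ_k·((1−β_{k−1}) + c₁ β_{k−1})·‖e_{k−1}‖_∞ + c₂·(‖δ_k‖_∞ + ‖δ_{k−1}‖_∞)·|τ_1|·‖δ_{k−1}‖_∞ + c₂·Σ_{i=2}^m (‖δ_k‖_∞ + ‖δ_{k−i}‖_∞ + 2·Σ_{l=1}^{i−1} ‖δ_{k−l}‖_∞)·|τ_i|·‖δ_{k−i}‖_∞. -/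
/-!
Linearize `T` exactly along segments with the mean derivative
`A(x, y) = ∫₀¹ DT(x + t (y - x)) dt`, so that `T y - T x = A(x, y) (y - x)`.
Summation by parts rewrites the Anderson mixture `∑ αᵢ Q⁽ᵏ⁻¹⁻ᵐ⁺ⁱ⁾` as
`Q⁽ᵏ⁻¹⁾ - ∑ τᵢ δₖ₋ᵢ` and its image `∑ αᵢ T Q⁽ᵏ⁻¹⁻ᵐ⁺ⁱ⁾` as `T Q⁽ᵏ⁻¹⁾ - ∑ τᵢ Aᵢ δₖ₋ᵢ`,
with `Aᵢ = A(Q⁽ᵏ⁻ⁱ⁻¹⁾, Q⁽ᵏ⁻ⁱ⁾)`. Linearizing `T Q⁽ᵏ⁾` around `Q⁽ᵏ⁻¹⁾` with `A₀ = A(Q⁽ᵏ⁻¹⁾, Q⁽ᵏ⁾)`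
then gives the exact identity
`eₖ = (1 - β) s + β A₀ s + ∑ τᵢ (Aᵢ - A₀) δₖ₋ᵢ`, where `s = ∑ αᵢ eₖ₋₁₋ₘ₊ᵢ`.
Here `‖A₀‖ ≤ c₁`, and `‖Aᵢ - A₀‖` is at most `c₂` times the distance between the two segments'
endpoints, which telescopes into the `δ`'s.
-/

open Finset

section MeanFDeriv

variable {E F : Type*} [NormedAddCommGroup E] [NormedSpace ℝ E]
  [NormedAddCommGroup F] [NormedSpace ℝ F] {T : E → F}

noncomputable def meanFDeriv (T : E → F) (x y : E) : E →L[ℝ] F :=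
  ∫ t in (0 : ℝ)..1, fderiv ℝ T (x + t • (y - x))

lemma continuous_fderiv_comp_segment (hT : ContDiff ℝ 1 T) (x y : E) :
    Continuous fun t : ℝ => fderiv ℝ T (x + t • (y - x)) :=
  (hT.continuous_fderiv one_ne_zero).comp (by fun_prop)

lemma meanFDeriv_apply_sub [CompleteSpace F] (hT : ContDiff ℝ 1 T) (x y : E) :
    meanFDeriv T x y (y - x) = T y - T x := by
  have hcont := continuous_fderiv_comp_segment hT x y
  have hderiv : ∀ t ∈ Set.uIcc (0 : ℝ) 1, HasDerivAt (fun t : ℝ => T (x + t • (y - x)))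
      (fderiv ℝ T (x + t • (y - x)) (y - x)) t := fun t _ => by
    have hpath : HasDerivAt (fun t : ℝ => x + t • (y - x)) (y - x) t := by
      simpa using ((hasDerivAt_id t).smul_const (y - x)).const_add x
    exact ((hT.differentiable one_ne_zero _).hasFDerivAt).comp_hasDerivAt t hpath
  rw [meanFDeriv, ContinuousLinearMap.intervalIntegral_apply (hcont.intervalIntegrable 0 1),
    intervalIntegral.integral_eq_sub_of_hasDerivAt hderiv
      ((hcont.clm_apply continuous_const).intervalIntegrable 0 1)]
  simp

lemma norm_meanFDeriv_le {c : ℝ} (hc : ∀ z, ‖fderiv ℝ T z‖ ≤ c) (x y : E) :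
    ‖meanFDeriv T x y‖ ≤ c := by
  simpa [meanFDeriv] using intervalIntegral.norm_integral_le_of_norm_le_const (a := 0) (b := 1)
    fun t _ => hc (x + t • (y - x))

lemma norm_fderiv_sub_le (hT : ContDiff ℝ 2 T) {c : ℝ}
    (hc : ∀ z, ‖iteratedFDeriv ℝ 2 T z‖ ≤ c) (u v : E) :
    ‖fderiv ℝ T u - fderiv ℝ T v‖ ≤ c * ‖u - v‖ := by
  refine convex_univ.norm_image_sub_le_of_norm_fderiv_le (𝕜 := ℝ) (fun z _ => ?_) (fun z _ => ?_)
    (Set.mem_univ v) (Set.mem_univ u)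
  · exact (hT.fderiv_right (m := 1) le_rfl).differentiable one_ne_zero z
  · rw [← norm_iteratedFDeriv_one, norm_iteratedFDeriv_fderiv]
    exact hc z

lemma norm_meanFDeriv_sub_le (hT : ContDiff ℝ 2 T) {c : ℝ}
    (hc : ∀ z, ‖iteratedFDeriv ℝ 2 T z‖ ≤ c) (x y x' y' : E) :
    ‖meanFDeriv T x y - meanFDeriv T x' y'‖ ≤ c * (‖x - x'‖ + ‖y - y'‖) := by
  have hT1 : ContDiff ℝ 1 T := hT.of_le (by norm_num)
  rw [meanFDeriv, meanFDeriv, ← intervalIntegral.integral_sub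
    ((continuous_fderiv_comp_segment hT1 x y).intervalIntegrable 0 1)
    ((continuous_fderiv_comp_segment hT1 x' y').intervalIntegrable 0 1)]
  refine (intervalIntegral.norm_integral_le_of_norm_le_const (C := c * (‖x - x'‖ + ‖y - y'‖))
    fun t ht => ?_).trans (by simp)
  rw [Set.uIoc_of_le zero_le_one] at ht
  have hc0 : 0 ≤ c := (norm_nonneg _).trans (hc x)
  calc _ ≤ c * ‖(x + t • (y - x)) - (x' + t • (y' - x'))‖ := norm_fderiv_sub_le hT hc _ _
    _ ≤ c * (‖x - x'‖ + ‖y - y'‖) := by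
      gcongr
      rw [show (x + t • (y - x)) - (x' + t • (y' - x')) = (1 - t) • (x - x') + t • (y - y') by
        module]
      refine (norm_add_le _ _).trans ?_
      rw [norm_smul, norm_smul, Real.norm_of_nonneg (by linarith [ht.2]),
        Real.norm_of_nonneg ht.1.le]
      nlinarith [norm_nonneg (x - x'), norm_nonneg (y - y'), ht.1, ht.2]

end MeanFDeriv

section SummationByParts

variable {R V : Type*} [CommRing R] [AddCommGroup V] [Module R V]

lemma sum_range_succ_smul_eq_sub_sum (a : ℕ → R) (f : ℕ → V) (m : ℕ) :
    ∑ i ∈ range (m + 1), a i • f i = (∑ i ∈ range (m + 1), a i) • f m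
      - ∑ l ∈ range m, (∑ j ∈ range (l + 1), a j) • (f (l + 1) - f l) := by
  induction m with
  | zero => simp
  | succ m ih =>
    rw [sum_range_succ (fun i => a i • f i), ih,
      sum_range_succ (fun l => (∑ j ∈ range (l + 1), a j) • (f (l + 1) - f l)) m,
      sum_range_succ a (m + 1)]
    module

lemma sum_smul_window_eq {m k : ℕ} (hk : m + 1 ≤ k) (a : ℕ → R)
    (ha : ∑ i ∈ range (m + 1), a i = 1) (τ : ℕ → R)
    (hτ : ∀ i, 1 ≤ i → i ≤ m → τ i = ∑ l ∈ range (m - i + 1), a l) (F : ℕ → V) :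
    ∑ i ∈ range (m + 1), a i • F (k - 1 - m + i)
      = F (k - 1) - ∑ i ∈ Icc 1 m, τ i • (F (k - i) - F (k - i - 1)) := by
  rw [sum_range_succ_smul_eq_sub_sum a (fun i => F (k - 1 - m + i)) m, ha, one_smul,
    show k - 1 - m + m = k - 1 by omega]
  congr 1
  refine sum_nbij' (fun l => m - l) (fun i => m - i) ?_ ?_ ?_ ?_ ?_
  all_goals intro i hi; simp only [mem_range, mem_Icc] at hi ⊢
  all_goals try omega
  rw [hτ (m - i) (by omega) (by omega), show m - (m - i) + 1 = i + 1 by omega,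
    show k - 1 - m + (i + 1) = k - (m - i) by omega,
    show k - 1 - m + i = k - (m - i) - 1 by omega]

end SummationByParts

lemma sub_eq_sum_Ico {E : Type*} [AddCommGroup E] (Q δ : ℕ → E)
    (hδ : ∀ j, δ j = Q j - Q (j - 1)) {i j k : ℕ} (hji : j ≤ i) (hik : i ≤ k) :
    Q (k - j) - Q (k - i) = ∑ l ∈ Ico j i, δ (k - l) := by
  induction i, hji using Nat.le_induction with
  | base => simp
  | succ i hji ih =>
    rw [sum_Ico_succ_top hji, ← ih (by omega), hδ, show k - (i + 1) = k - i - 1 by omega]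
    abel

lemma norm_sub_le_sum_Ico {E : Type*} [SeminormedAddCommGroup E] (Q δ : ℕ → E)
    (hδ : ∀ j, δ j = Q j - Q (j - 1)) {i j k : ℕ} (hji : j ≤ i) (hik : i ≤ k) :
    ‖Q (k - i) - Q (k - j)‖ ≤ ∑ l ∈ Ico j i, ‖δ (k - l)‖ := by
  rw [norm_sub_rev, sub_eq_sum_Ico Q δ hδ hji hik]
  exact norm_sum_le _ _

lemma norm_meanFDeriv_sub_meanFDeriv_le {E F : Type*} [NormedAddCommGroup E] [NormedSpace ℝ E]
    [NormedAddCommGroup F] [NormedSpace ℝ F] {T : E → F} (hT : ContDiff ℝ 2 T) {c : ℝ}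
    (hc : ∀ z, ‖iteratedFDeriv ℝ 2 T z‖ ≤ c) (Q δ : ℕ → E) (hδ : ∀ j, δ j = Q j - Q (j - 1))
    {i k : ℕ} (hi : 1 ≤ i) (hik : i < k) :
    ‖meanFDeriv T (Q (k - i - 1)) (Q (k - i)) - meanFDeriv T (Q (k - 1)) (Q k)‖
      ≤ c * (‖δ k‖ + ‖δ (k - i)‖ + 2 * ∑ l ∈ Icc 1 (i - 1), ‖δ (k - l)‖) := by
  have hc0 : 0 ≤ c := (norm_nonneg _).trans (hc 0)
  have hIcc : Icc 1 (i - 1) = Ico 1 i := by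
    rw [← Ico_add_one_right_eq_Icc, Nat.sub_add_cancel hi]
  have hstart : ‖Q (k - i - 1) - Q (k - 1)‖ ≤ ∑ l ∈ Ico 1 i, ‖δ (k - l)‖ + ‖δ (k - i)‖ := by
    rw [← sum_Ico_succ_top hi, show k - i - 1 = k - (i + 1) by omega]
    exact norm_sub_le_sum_Ico Q δ hδ (by omega) hik
  have hend : ‖Q (k - i) - Q k‖ ≤ ‖δ k‖ + ∑ l ∈ Ico 1 i, ‖δ (k - l)‖ := by
    have h := norm_sub_le_sum_Ico Q δ hδ (Nat.zero_le i) hik.le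
    rwa [sum_eq_sum_Ico_succ_bot hi, Nat.sub_zero, zero_add] at h
  calc _ ≤ c * (‖Q (k - i - 1) - Q (k - 1)‖ + ‖Q (k - i) - Q k‖) :=
        norm_meanFDeriv_sub_le hT hc _ _ _ _
    _ ≤ _ := by
      rw [hIcc]
      exact mul_le_mul_of_nonneg_left (by linarith) hc0

section DampedResidual

variable {ι E : Type*} [NormedAddCommGroup E] [NormedSpace ℝ E]

lemma sub_eq_damped_residual (L : E →L[ℝ] E) (B : ι → E →L[ℝ] E) (s : Finset ι) (τ : ι → ℝ)
    (d : ι → E) {b : ℝ} {x Tx X W y Ty : E}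
    (hX : X = x - ∑ i ∈ s, τ i • d i) (hW : W = Tx - ∑ i ∈ s, τ i • B i (d i))
    (hy : y = (1 - b) • X + b • W) (hTy : Ty = Tx + L (y - x)) :
    Ty - y = (1 - b) • (W - X) + b • L (W - X) + ∑ i ∈ s, τ i • (B i - L) (d i) := by
  subst hX hW hy hTy
  simp only [sub_apply, smul_sub, sum_sub_distrib, map_sub, map_add, map_smul, map_sum]
  module

lemma norm_damped_residual_le (L : E →L[ℝ] E) (B : ι → E →L[ℝ] E) (s : Finset ι) (τ : ι → ℝ)
    (d : ι → E) (v : E) {b c : ℝ} {r : ι → ℝ} (hb0 : 0 ≤ b) (hb1 : b ≤ 1) (hL : ‖L‖ ≤ c)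
    (hB : ∀ i ∈ s, ‖B i - L‖ ≤ r i) :
    ‖(1 - b) • v + b • L v + ∑ i ∈ s, τ i • (B i - L) (d i)‖
      ≤ ((1 - b) + c * b) * ‖v‖ + ∑ i ∈ s, |τ i| * (r i * ‖d i‖) := by
  have hLv : ‖b • L v‖ ≤ c * b * ‖v‖ := by
    rw [norm_smul, Real.norm_of_nonneg hb0]
    nlinarith [L.le_of_opNorm_le hL v]
  have hsum : ‖∑ i ∈ s, τ i • (B i - L) (d i)‖ ≤ ∑ i ∈ s, |τ i| * (r i * ‖d i‖) := by
    refine (norm_sum_le _ _).trans (sum_le_sum fun i hi => ?_)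
    rw [norm_smul, Real.norm_eq_abs]
    gcongr
    exact (B i - L).le_of_opNorm_le (hB i hi) (d i)
  have h1b : ‖(1 - b) • v‖ = (1 - b) * ‖v‖ := by
    rw [norm_smul, Real.norm_of_nonneg (by linarith)]
  linarith [norm_add₃_le (a := (1 - b) • v) (b := b • L v) (c := ∑ i ∈ s, τ i • (B i - L) (d i))]

end DampedResidual

theorem stmt_1_general (n m : ℕ) (hm : 1 ≤ m) (c₁ c₂ : ℝ)
    (T : (Fin n → ℝ) → (Fin n → ℝ)) (hT : ContDiff ℝ 2 T)
    (hDT : ∀ x : Fin n → ℝ, ‖fderiv ℝ T x‖ ≤ c₁)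
    (hD2T : ∀ x : Fin n → ℝ, ‖iteratedFDeriv ℝ 2 T x‖ ≤ c₂)
    (Q : ℕ → Fin n → ℝ) (α : ℕ → ℕ → ℝ) (β : ℕ → ℝ)
    (hiter : ∀ j, m ≤ j →
      Q (j + 1) = (1 - β j) • ∑ i ∈ Finset.range (m + 1), α j i • Q (j - m + i)
        + β j • ∑ i ∈ Finset.range (m + 1), α j i • T (Q (j - m + i)))
    (hα : ∀ j, ∑ i ∈ Finset.range (m + 1), α j i = 1)
    (hβ : ∀ j, 0 ≤ β j ∧ β j ≤ 1)
    (k : ℕ) (hk : m + 1 ≤ k)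
    (e : ℕ → Fin n → ℝ) (he : ∀ j, e j = T (Q j) - Q j)
    (δ : ℕ → Fin n → ℝ) (hδ : ∀ j, δ j = Q j - Q (j - 1))
    (τ : ℕ → ℝ)
    (hτ : ∀ i, 1 ≤ i → i ≤ m → τ i = ∑ l ∈ Finset.range (m - i + 1), α (k - 1) l)
    (θ : ℝ)
    (hθ : ‖∑ i ∈ Finset.range (m + 1), α (k - 1) i • e (k - 1 - m + i)‖ =
      θ * ‖e (k - 1)‖) :
    ‖e k‖ ≤ θ * ((1 - β (k - 1)) + c₁ * β (k - 1)) * ‖e (k - 1)‖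
      + c₂ * (‖δ k‖ + ‖δ (k - 1)‖) * |τ 1| * ‖δ (k - 1)‖
      + c₂ * ∑ i ∈ Finset.Icc 2 m,
          (‖δ k‖ + ‖δ (k - i)‖ + 2 * ∑ l ∈ Finset.Icc 1 (i - 1), ‖δ (k - l)‖)
            * |τ i| * ‖δ (k - i)‖ := by
  have hT1 : ContDiff ℝ 1 T := hT.of_le (by norm_num)
  have hQk := hiter (k - 1) (by omega)
  rw [Nat.sub_add_cancel (by omega : 1 ≤ k)] at hQk
  have hres := sub_eq_damped_residual (meanFDeriv T (Q (k - 1)) (Q k))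
    (fun i => meanFDeriv T (Q (k - i - 1)) (Q (k - i))) (Icc 1 m) τ (fun i => δ (k - i))
    (x := Q (k - 1)) (Tx := T (Q (k - 1))) (Ty := T (Q k))
    (by rw [sum_smul_window_eq hk _ (hα _) τ hτ Q]; simp only [hδ])
    (by rw [sum_smul_window_eq hk _ (hα _) τ hτ (fun j => T (Q j))]
        simp only [hδ, meanFDeriv_apply_sub hT1])
    hQk (by rw [meanFDeriv_apply_sub hT1]; abel)
  have hs : ∑ i ∈ range (m + 1), α (k - 1) i • T (Q (k - 1 - m + i))
      - ∑ i ∈ range (m + 1), α (k - 1) i • Q (k - 1 - m + i)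
      = ∑ i ∈ range (m + 1), α (k - 1) i • e (k - 1 - m + i) := by
    simp only [he, smul_sub, sum_sub_distrib]
  rw [he, hres, hs]
  refine (norm_damped_residual_le _ _ _ _ _ _ (hβ _).1 (hβ _).2 (norm_meanFDeriv_le hDT _ _)
    fun i hi => norm_meanFDeriv_sub_meanFDeriv_le hT hD2T Q δ hδ (mem_Icc.1 hi).1
      ((mem_Icc.1 hi).2.trans_lt hk)).trans_eq ?_
  rw [hθ, ← add_sum_Ioc_eq_sum_Icc hm, ← Icc_add_one_left_eq_Ioc, Nat.sub_self,
    Icc_eq_empty (by omega), sum_empty, mul_sum (Icc 2 m), ← add_assoc]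
  congr 1
  · ring
  · exact sum_congr rfl fun i _ => by ring

/-- **Theorem 1 (one-step residual bound for damped Anderson acceleration).**
`ℝ^n` carries the sup norm (the `Pi` norm on `Fin n → ℝ`); operator norms of
derivatives are the induced norms. For `T` twice continuously differentiable
with `‖DT‖ ≤ c₁` and `‖D²T‖ ≤ c₂`, Anderson iterates `Q` with memory `m`,
mixing coefficients `α` summing to one and damping `β_j ∈ [0,1]`, and stage
gain `θ` defined by `‖∑ᵢ α_i^{(k-1)} e_{k-1-m+i}‖_∞ = θ ‖e_{k-1}‖_∞`, the
residual `e_k = T Q^{(k)} - Q^{(k)}` satisfies the stated bound. -/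
theorem stmt_1 (n m : ℕ) (hn : 1 ≤ n) (hm : 1 ≤ m) (c₁ c₂ : ℝ)
    (hc₁ : 0 ≤ c₁) (hc₂ : 0 ≤ c₂)
    (T : (Fin n → ℝ) → (Fin n → ℝ)) (hT : ContDiff ℝ 2 T)
    (hDT : ∀ x : Fin n → ℝ, ‖fderiv ℝ T x‖ ≤ c₁)
    (hD2T : ∀ x : Fin n → ℝ, ‖iteratedFDeriv ℝ 2 T x‖ ≤ c₂)
    (Q : ℕ → Fin n → ℝ) (α : ℕ → ℕ → ℝ) (β : ℕ → ℝ)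
    (hiter : ∀ j, m ≤ j →
      Q (j + 1) = (1 - β j) • ∑ i ∈ Finset.range (m + 1), α j i • Q (j - m + i)
        + β j • ∑ i ∈ Finset.range (m + 1), α j i • T (Q (j - m + i)))
    (hα : ∀ j, ∑ i ∈ Finset.range (m + 1), α j i = 1)
    (hβ : ∀ j, 0 ≤ β j ∧ β j ≤ 1)
    (k : ℕ) (hk : m + 1 ≤ k)
    (e : ℕ → Fin n → ℝ) (he : ∀ j, e j = T (Q j) - Q j)
    (δ : ℕ → Fin n → ℝ) (hδ : ∀ j, δ j = Q j - Q (j - 1))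
    (τ : ℕ → ℝ)
    (hτ : ∀ i, 1 ≤ i → i ≤ m → τ i = ∑ l ∈ Finset.range (m - i + 1), α (k - 1) l)
    (θ : ℝ) (hθ0 : 0 ≤ θ)
    (hθ : ‖∑ i ∈ Finset.range (m + 1), α (k - 1) i • e (k - 1 - m + i)‖ =
      θ * ‖e (k - 1)‖) :
    ‖e k‖ ≤ θ * ((1 - β (k - 1)) + c₁ * β (k - 1)) * ‖e (k - 1)‖
      + c₂ * (‖δ k‖ + ‖δ (k - 1)‖) * |τ 1| * ‖δ (k - 1)‖
      + c₂ * ∑ i ∈ Finset.Icc 2 m,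
          (‖δ k‖ + ‖δ (k - i)‖ + 2 * ∑ l ∈ Finset.Icc 1 (i - 1), ‖δ (k - l)‖)
            * |τ i| * ‖δ (k - i)‖ :=
  stmt_1_general n m hm c₁ c₂ T hT hDT hD2T Q α β hiter hα hβ k hk e he δ hδ τ hτ θ hθ
end

section
/- Let n, m ≥ 1, let Δ, H ∈ ℝ^{n×m} with ‖Δ‖_F² + ‖H‖_F² > 0, let η > 0 and 0 ≤ β ≤ 1. Set λ = η(‖Δ‖_F² + ‖H‖_F²) and G̃ = −β I + (Δ + β H)(HᵀH + λ I)^{-1} Hᵀ ∈ ℝ^{n×n}. Then the spectral norm of G̃ satisfies ‖G̃‖₂ ≤ β + 2/η. -/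
/-!
Write `R = (HᵀH + λI)⁻¹`. Since `HᵀH` is positive semidefinite, `‖R‖₂ ≤ 1/λ`, and the spectral
norm is dominated by the Frobenius norm, so `‖Δ R Hᵀ‖₂ ≤ ‖Δ‖_F ‖H‖_F / λ` and
`‖H R Hᵀ‖₂ ≤ ‖H‖_F² / λ`. Both numerators are at most `‖Δ‖_F² + ‖H‖_F² = λ / η`, so the triangle
inequality gives `‖G̃‖₂ ≤ β + 1/η + β/η ≤ β + 2/η`.
-/

open Matrix

/-- The spectral (ℓ₂ operator) norm of a real matrix. -/
noncomputable def specNorm {n m : ℕ} (M : Matrix (Fin n) (Fin m) ℝ) : ℝ :=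
  ‖LinearMap.toContinuousLinearMap (Matrix.toEuclideanLin M)‖

/-- The Frobenius norm of a real matrix. -/
noncomputable def frobNorm {n m : ℕ} (M : Matrix (Fin n) (Fin m) ℝ) : ℝ :=
  Real.sqrt (∑ i, ∑ j, M i j ^ 2)

open scoped Matrix.Norms.L2Operator RealInnerProductSpace

theorem ContinuousLinearMap.mul_norm_le_norm_apply_of_mul_sq_le_inner {E : Type*}
    [NormedAddCommGroup E] [InnerProductSpace ℝ E] (T : E →L[ℝ] E) {c : ℝ}
    (hT : ∀ x, c * ‖x‖ ^ 2 ≤ ⟪x, T x⟫) (x : E) : c * ‖x‖ ≤ ‖T x‖ := by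
  rcases (norm_nonneg x).eq_or_lt with hx | hx
  · simp [← hx]
  · have := (hT x).trans (real_inner_le_norm x (T x))
    nlinarith

namespace Matrix

variable {ι : Type*} [Fintype ι] [DecidableEq ι]

theorem l2_opNorm_one_le : ‖(1 : Matrix ι ι ℝ)‖ ≤ 1 := by
  rw [← l2_opNorm_toEuclideanCLM, map_one]
  exact ContinuousLinearMap.norm_id_le

theorem l2_opNorm_inv_add_smul_one_le {A : Matrix ι ι ℝ} (hA : A.PosSemidef) {c : ℝ}
    (hc : 0 < c) : ‖(A + c • 1)⁻¹‖ ≤ c⁻¹ := by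
  set M := A + c • (1 : Matrix ι ι ℝ)
  set T := toEuclideanCLM (n := ι) (𝕜 := ℝ)
  have hM : IsUnit M.det :=
    (isUnit_iff_isUnit_det M).1 (PosDef.posSemidef_add hA (PosDef.one.smul hc)).isUnit
  have hcoercive : ∀ x, c * ‖x‖ ≤ ‖T M x‖ := by
    refine (T M).mul_norm_le_norm_apply_of_mul_sq_le_inner fun x => ?_
    have hx : ‖x‖ ^ 2 = x.ofLp ⬝ᵥ x.ofLp := by
      rw [EuclideanSpace.real_norm_sq_eq]
      simp only [dotProduct, sq]
    have hAx : 0 ≤ x.ofLp ⬝ᵥ A *ᵥ x.ofLp := by simpa using hA.dotProduct_mulVec_nonneg x.ofLp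
    rw [inner_toEuclideanCLM, hx]
    simp only [M, add_mulVec, dotProduct_add, smul_mulVec, one_mulVec, dotProduct_smul, smul_eq_mul]
    linarith
  have hright_inv : ∀ y, T M (T M⁻¹ y) = y := fun y => by
    rw [← mul_apply_eq_comp, ← map_mul, mul_nonsing_inv M hM, map_one, one_apply_eq_self]
  rw [← l2_opNorm_toEuclideanCLM]
  refine ContinuousLinearMap.opNorm_le_bound _ (inv_nonneg.2 hc.le) fun y => ?_
  rw [inv_mul_eq_div, le_div_iff₀ hc, mul_comm]
  simpa only [hright_inv] using hcoercive (T M⁻¹ y)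

end Matrix

theorem specNorm_eq_l2_opNorm {n m : ℕ} (A : Matrix (Fin n) (Fin m) ℝ) : specNorm A = ‖A‖ := rfl

theorem frobNorm_nonneg {n m : ℕ} (A : Matrix (Fin n) (Fin m) ℝ) : 0 ≤ frobNorm A :=
  Real.sqrt_nonneg _

theorem l2_opNorm_le_frobNorm {n m : ℕ} (A : Matrix (Fin n) (Fin m) ℝ) : ‖A‖ ≤ frobNorm A := by
  rw [l2_opNorm_def]
  refine ContinuousLinearMap.opNorm_le_bound _ (frobNorm_nonneg A) fun x => ?_
  rw [← pow_le_pow_iff_left₀ (norm_nonneg _) (by have hA := frobNorm_nonneg A; positivity)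
      two_ne_zero, mul_pow, frobNorm, Real.sq_sqrt (by positivity),
    EuclideanSpace.real_norm_sq_eq, EuclideanSpace.real_norm_sq_eq, Finset.sum_mul]
  refine Finset.sum_le_sum fun i _ => ?_
  simpa [mulVec, dotProduct] using
    Finset.sum_mul_sq_le_sq_mul_sq Finset.univ (fun j => A i j) x.ofLp

theorem l2_opNorm_mul_inv_mul_transpose_le {n m : ℕ} (A B : Matrix (Fin n) (Fin m) ℝ) {c : ℝ}
    (hc : 0 < c) : ‖A * (Bᵀ * B + c • 1)⁻¹ * Bᵀ‖ ≤ frobNorm A * frobNorm B / c := by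
  have hBB : (Bᵀ * B).PosSemidef := by
    simpa only [conjTranspose_eq_transpose_of_trivial] using posSemidef_conjTranspose_mul_self B
  have hBt : ‖Bᵀ‖ = ‖B‖ := by
    rw [← conjTranspose_eq_transpose_of_trivial, l2_opNorm_conjTranspose]
  have hA := frobNorm_nonneg A
  calc ‖A * (Bᵀ * B + c • 1)⁻¹ * Bᵀ‖
      ≤ ‖A‖ * ‖(Bᵀ * B + c • 1)⁻¹‖ * ‖Bᵀ‖ :=
        (l2_opNorm_mul _ _).trans (mul_le_mul_of_nonneg_right (l2_opNorm_mul _ _) (norm_nonneg _))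
    _ ≤ frobNorm A * c⁻¹ * frobNorm B := by
        rw [hBt]
        gcongr
        exacts [l2_opNorm_le_frobNorm A, l2_opNorm_inv_add_smul_one_le hBB hc,
          l2_opNorm_le_frobNorm B]
    _ = frobNorm A * frobNorm B / c := by ring

theorem stmt_3_general (n m : ℕ)
    (Δ H : Matrix (Fin n) (Fin m) ℝ)
    (hpos : 0 < frobNorm Δ ^ 2 + frobNorm H ^ 2)
    (η : ℝ) (hη : 0 < η) (β : ℝ) (hβ0 : 0 ≤ β) (hβ1 : β ≤ 1)
    (lam : ℝ) (hlam : lam = η * (frobNorm Δ ^ 2 + frobNorm H ^ 2))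
    (Gt : Matrix (Fin n) (Fin n) ℝ)
    (hGt : Gt = -β • (1 : Matrix (Fin n) (Fin n) ℝ)
        + (Δ + β • H) * (Hᵀ * H + lam • (1 : Matrix (Fin m) (Fin m) ℝ))⁻¹ * Hᵀ) :
    specNorm Gt ≤ β + 2 / η := by
  set fΔ := frobNorm Δ
  set fH := frobNorm H
  have hlam_pos : 0 < lam := hlam ▸ mul_pos hη hpos
  have hbound : fΔ * fH / lam + β * (fH * fH / lam) ≤ 2 / η := by
    have hΔH : fΔ * fH ≤ fΔ ^ 2 + fH ^ 2 := by nlinarith [sq_nonneg (fΔ - fH)]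
    have hHH : β * (fH * fH) ≤ fΔ ^ 2 + fH ^ 2 := by
      nlinarith [sq_nonneg fΔ, mul_le_mul_of_nonneg_right hβ1 (mul_self_nonneg fH)]
    calc fΔ * fH / lam + β * (fH * fH / lam) = (fΔ * fH + β * (fH * fH)) / lam := by ring
      _ ≤ (2 * (fΔ ^ 2 + fH ^ 2)) / lam := by gcongr; linarith
      _ = 2 / η := by rw [hlam]; field_simp
  set R := (Hᵀ * H + lam • (1 : Matrix (Fin m) (Fin m) ℝ))⁻¹
  rw [specNorm_eq_l2_opNorm, hGt, Matrix.add_mul, Matrix.add_mul, Matrix.smul_mul,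
    Matrix.smul_mul, ← add_assoc]
  calc _ ≤ ‖-β • (1 : Matrix (Fin n) (Fin n) ℝ)‖ + ‖Δ * R * Hᵀ‖ + ‖β • (H * R * Hᵀ)‖ :=
        norm_add₃_le
    _ ≤ β * 1 + fΔ * fH / lam + β * (fH * fH / lam) := by
        rw [norm_smul, norm_smul, norm_neg, Real.norm_of_nonneg hβ0]
        gcongr
        exacts [l2_opNorm_one_le, l2_opNorm_mul_inv_mul_transpose_le Δ H hlam_pos,
          l2_opNorm_mul_inv_mul_transpose_le H H hlam_pos]
    _ ≤ β + 2 / η := by linarith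

/-- **Spectral-norm bound for the stable-regularized update matrix (Theorem 3).**
With `λ = η(‖Δ‖_F² + ‖H‖_F²)` and
`G̃ = -β I + (Δ + β H)(HᵀH + λ I)⁻¹ Hᵀ`, one has `‖G̃‖₂ ≤ β + 2/η`. -/
theorem stmt_3 (n m : ℕ) (hn : 1 ≤ n) (hm : 1 ≤ m)
    (Δ H : Matrix (Fin n) (Fin m) ℝ)
    (hpos : 0 < frobNorm Δ ^ 2 + frobNorm H ^ 2)
    (η : ℝ) (hη : 0 < η) (β : ℝ) (hβ0 : 0 ≤ β) (hβ1 : β ≤ 1)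
    (lam : ℝ) (hlam : lam = η * (frobNorm Δ ^ 2 + frobNorm H ^ 2))
    (Gt : Matrix (Fin n) (Fin n) ℝ)
    (hGt : Gt = -β • (1 : Matrix (Fin n) (Fin n) ℝ)
        + (Δ + β • H) * (Hᵀ * H + lam • (1 : Matrix (Fin m) (Fin m) ℝ))⁻¹ * Hᵀ) :
    specNorm Gt ≤ β + 2 / η :=
  stmt_3_general n m Δ H hpos η hη β hβ0 hβ1 lam hlam Gt hGt
end

section
/- Let n ≥ 1, m ≥ 1, let H, Δ ∈ ℝ^{n×m}, e ∈ ℝ^n, and η > 0 with ‖Δ‖_F² + ‖H‖_F² > 0. Assume HᵀH is invertible. Set λ = η(‖Δ‖_F² + ‖H‖_F²), τ_non = (HᵀH)^{-1} Hᵀ e, τ_reg = (HᵀH + λ I)^{-1} Hᵀ e, and α_non = A·(1, τ_non)ᵀ, α_reg = A·(1, τ_reg)ᵀ ∈ ℝ^{m+1}, where A is the (m+1)×(m+1) matrix with entries A_{i,j} = 1 if j = m − i, A_{i,j} = −1 if j = m − i + 1, and 0 otherwise (indices 0,…,m). Then ‖α_reg − α_non‖₂² ≤ cond₂(A)²·‖α_non‖₂²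 − (2m+1)/(m+1), where cond₂(A) = ‖A‖₂·‖A^{-1}‖₂. -/
open Matrix

/-- The `(m+1) × (m+1)` transformation matrix `A` with `A i j = 1` if `j = m - i`,
`A i j = -1` if `j = m - i + 1`, and `0` otherwise. -/
def Amat (m : ℕ) : Matrix (Fin (m + 1)) (Fin (m + 1)) ℝ :=
  Matrix.of fun i j =>
    if (j : ℕ) = m - (i : ℕ) then 1
    else if (j : ℕ) = m - (i : ℕ) + 1 then -1 else 0

/-! Write `δ = τ_reg - τ_non`. Then `α_reg - α_non = A (0, δ)`, and since `(HᵀH + λI) δ = -λ τ_non`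
with `HᵀH ⪰ 0`, ridge regression shrinks: `‖δ‖ ≤ ‖τ_non‖`. So the left side is at most
`‖A‖² ‖τ_non‖²`. On the other side `(1, τ_non) = A⁻¹ α_non` gives
`1 + ‖τ_non‖² ≤ ‖A⁻¹‖² ‖α_non‖²`, and it remains to see `(2m+1)/(m+1) ≤ ‖A‖²`: the alternating
sign vector `v` has `‖v‖² = m + 1` and `‖A v‖² = 4m + 1`. -/

lemma sum_sq_mulVec_le_specNorm_sq {n m : ℕ} (M : Matrix (Fin n) (Fin m) ℝ) (v : Fin m → ℝ) :
    ∑ i, (M *ᵥ v) i ^ 2 ≤ specNorm M ^ 2 * ∑ i, v i ^ 2 := by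
  unfold specNorm
  have h := pow_le_pow_left₀ (norm_nonneg _)
    ((LinearMap.toContinuousLinearMap (toEuclideanLin M)).le_opNorm (WithLp.toLp 2 v)) 2
  rw [mul_pow, EuclideanSpace.real_norm_sq_eq, EuclideanSpace.real_norm_sq_eq] at h
  simpa using h

lemma sum_sq_sub_le_of_ridge {ι : Type*} [Fintype ι] [DecidableEq ι] {B : Matrix ι ι ℝ}
    (hB : B.PosSemidef) {lam : ℝ} (hlam : 0 < lam) {x y : ι → ℝ}
    (h : (B + lam • 1) *ᵥ x = B *ᵥ y) :
    ∑ i, (x i - y i) ^ 2 ≤ ∑ i, y i ^ 2 := by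
  set d := x - y
  have hd : ∀ i, (B *ᵥ d) i + lam * d i = -(lam * y i) := fun i => by
    have := congrFun h i
    simp only [add_mulVec, smul_mulVec, one_mulVec, Pi.add_apply, Pi.smul_apply,
      smul_eq_mul] at this
    simp only [d, mulVec_sub, Pi.sub_apply]
    linarith
  have hexpand : lam ^ 2 * ∑ i, y i ^ 2 =
      ∑ i, (B *ᵥ d) i ^ 2 + 2 * lam * (d ⬝ᵥ (B *ᵥ d)) + lam ^ 2 * ∑ i, d i ^ 2 := by
    simp only [dotProduct, Finset.mul_sum, ← Finset.sum_add_distrib]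
    refine Finset.sum_congr rfl fun i _ => ?_
    linear_combination (lam * y i - ((B *ᵥ d) i + lam * d i)) * hd i
  have hquad : 0 ≤ d ⬝ᵥ (B *ᵥ d) := by simpa using hB.dotProduct_mulVec_nonneg d
  have hsq : 0 ≤ ∑ i, (B *ᵥ d) i ^ 2 := Finset.sum_nonneg fun i _ => sq_nonneg _
  have : lam ^ 2 * ∑ i, d i ^ 2 ≤ lam ^ 2 * ∑ i, y i ^ 2 := by nlinarith
  exact le_of_mul_le_mul_left this (by positivity)

lemma sum_sq_cons {k : ℕ} (a : ℝ) (v : Fin k → ℝ) :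
    ∑ i, (Fin.cons a v : Fin (k + 1) → ℝ) i ^ 2 = a ^ 2 + ∑ i, v i ^ 2 := by
  simp [Fin.sum_univ_succ]

lemma Amat_mulVec (m : ℕ) (x : Fin (m + 1) → ℝ) (i : Fin (m + 1)) :
    (Amat m *ᵥ x) i = x ⟨m - i, by omega⟩ -
      if h : 1 ≤ (i : ℕ) then x ⟨m - i + 1, by omega⟩ else 0 := by
  have hentry : ∀ j, Amat m i j * x j =
      (if j = ⟨m - i, by omega⟩ then x j else 0) +
        if h : 1 ≤ (i : ℕ) then (if j = ⟨m - i + 1, by omega⟩ then -x j else 0) else 0 := by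
    intro j
    simp only [Amat, of_apply, Fin.ext_iff]
    split_ifs <;> first | (exfalso; omega) | ring
  simp only [mulVec, dotProduct, hentry, Finset.sum_add_distrib, Finset.sum_ite_eq',
    Finset.mem_univ, if_true]
  split_ifs <;> simp [sub_eq_add_neg]

def AmatInv (m : ℕ) : Matrix (Fin (m + 1)) (Fin (m + 1)) ℝ :=
  Matrix.of fun i j => if (j : ℕ) ≤ m - (i : ℕ) then 1 else 0

lemma Amat_mul_AmatInv (m : ℕ) : Amat m * AmatInv m = 1 := by
  ext i j
  change (Amat m *ᵥ fun k => AmatInv m k j) i = _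
  rw [Amat_mulVec]
  simp only [AmatInv, of_apply, one_apply, Fin.ext_iff]
  split_ifs <;> first | (exfalso; omega) | norm_num

lemma inv_Amat_mulVec_Amat_mulVec (m : ℕ) (x : Fin (m + 1) → ℝ) :
    (Amat m)⁻¹ *ᵥ (Amat m *ᵥ x) = x := by
  rw [mulVec_mulVec, nonsing_inv_mul _ (isUnit_det_of_right_inverse (Amat_mul_AmatInv m)),
    one_mulVec]

lemma div_le_specNorm_Amat_sq (m : ℕ) :
    (2 * (m : ℝ) + 1) / ((m : ℝ) + 1) ≤ specNorm (Amat m) ^ 2 := by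
  set v : Fin (m + 1) → ℝ := fun j => (-1) ^ (j : ℕ)
  have hAv : ∀ i, (Amat m *ᵥ v) i ^ 2 = if (i : ℕ) = 0 then 1 else 4 := by
    intro i
    rw [Amat_mulVec]
    rcases neg_one_pow_eq_or ℝ (m - i) with hsign | hsign <;>
      split_ifs <;> first | (exfalso; omega) | simp [v, pow_succ, hsign] <;> norm_num
  have hnum : ∑ i, (Amat m *ᵥ v) i ^ 2 = 4 * m + 1 := by
    simp only [hAv, Fin.sum_univ_succ, Fin.val_eq_zero_iff, Fin.succ_ne_zero, ↓reduceIte,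
      Finset.sum_const, Finset.card_univ, Fintype.card_fin, nsmul_eq_mul]
    ring
  have hden : ∑ i, v i ^ 2 = m + 1 := by simp [v, ← pow_mul, pow_mul']
  have h := sum_sq_mulVec_le_specNorm_sq (Amat m) v
  rw [hnum, hden] at h
  rw [div_le_iff₀ (by positivity)]
  linarith

theorem stmt_5_general (n m : ℕ)
    (H Δ : Matrix (Fin n) (Fin m) ℝ) (e : Fin n → ℝ)
    (η : ℝ) (hη : 0 < η)
    (hpos : 0 < frobNorm Δ ^ 2 + frobNorm H ^ 2)
    (hinv : IsUnit (Hᵀ * H))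
    (lam : ℝ) (hlam : lam = η * (frobNorm Δ ^ 2 + frobNorm H ^ 2))
    (τnon τreg : Fin m → ℝ)
    (hτnon : τnon = (Hᵀ * H)⁻¹ *ᵥ (Hᵀ *ᵥ e))
    (hτreg : τreg = (Hᵀ * H + lam • (1 : Matrix (Fin m) (Fin m) ℝ))⁻¹ *ᵥ (Hᵀ *ᵥ e))
    (αnon αreg : Fin (m + 1) → ℝ)
    (hαnon : αnon = Amat m *ᵥ Fin.cons (1 : ℝ) τnon)
    (hαreg : αreg = Amat m *ᵥ Fin.cons (1 : ℝ) τreg) :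
    ∑ i, (αreg i - αnon i) ^ 2 ≤
      (specNorm (Amat m) * specNorm (Amat m)⁻¹) ^ 2 * (∑ i, αnon i ^ 2)
        - (2 * (m : ℝ) + 1) / ((m : ℝ) + 1) := by
  have hlam_pos : 0 < lam := hlam ▸ mul_pos hη hpos
  have hB : (Hᵀ * H).PosSemidef := by simpa using posSemidef_conjTranspose_mul_self H
  have hS : IsUnit (Hᵀ * H + lam • 1) :=
    (PosDef.posSemidef_add hB (PosDef.one.smul hlam_pos)).isUnit
  have hnon : (Hᵀ * H) *ᵥ τnon = Hᵀ *ᵥ e := by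
    rw [hτnon, mulVec_mulVec, mul_nonsing_inv _ ((isUnit_iff_isUnit_det _).mp hinv), one_mulVec]
  have hreg : (Hᵀ * H + lam • 1) *ᵥ τreg = Hᵀ *ᵥ e := by
    rw [hτreg, mulVec_mulVec, mul_nonsing_inv _ ((isUnit_iff_isUnit_det _).mp hS), one_mulVec]
  have hshrink : ∑ i, (τreg i - τnon i) ^ 2 ≤ ∑ i, τnon i ^ 2 :=
    sum_sq_sub_le_of_ridge hB hlam_pos (hreg.trans hnon.symm)
  have hdiff : αreg - αnon = Amat m *ᵥ Fin.cons 0 (τreg - τnon) := by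
    rw [hαreg, hαnon, ← mulVec_sub]
    exact congrArg _ ((cons_sub_cons (1 : ℝ) τreg 1 τnon).trans (by rw [sub_self]; rfl))
  have hrecover : 1 + ∑ i, τnon i ^ 2 ≤ specNorm (Amat m)⁻¹ ^ 2 * ∑ i, αnon i ^ 2 := by
    have h := sum_sq_mulVec_le_specNorm_sq (Amat m)⁻¹ αnon
    rwa [hαnon, inv_Amat_mulVec_Amat_mulVec, ← hαnon, sum_sq_cons, one_pow] at h
  have hA := div_le_specNorm_Amat_sq m
  calc ∑ i, (αreg i - αnon i) ^ 2
      ≤ specNorm (Amat m) ^ 2 * ∑ i, (τreg i - τnon i) ^ 2 := by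
        have h := sum_sq_mulVec_le_specNorm_sq (Amat m) (Fin.cons 0 (τreg - τnon))
        rwa [← hdiff, sum_sq_cons, zero_pow two_ne_zero, zero_add] at h
    _ ≤ specNorm (Amat m) ^ 2 * ∑ i, τnon i ^ 2 := by gcongr
    _ ≤ _ := by
        nlinarith [mul_le_mul_of_nonneg_left hrecover (sq_nonneg (specNorm (Amat m)))]

/-- **Second inequality of Proposition 2.** With `τ_non = (HᵀH)⁻¹ Hᵀ e`,
`τ_reg = (HᵀH + λI)⁻¹ Hᵀ e`, `α_non = A (1, τ_non)ᵀ`, `α_reg = A (1, τ_reg)ᵀ`: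
`‖α_reg - α_non‖₂² ≤ cond₂(A)² ‖α_non‖₂² - (2m+1)/(m+1)`,
where `cond₂(A) = ‖A‖₂ ‖A⁻¹‖₂`. -/
theorem stmt_5 (n m : ℕ) (hn : 1 ≤ n) (hm : 1 ≤ m)
    (H Δ : Matrix (Fin n) (Fin m) ℝ) (e : Fin n → ℝ)
    (η : ℝ) (hη : 0 < η)
    (hpos : 0 < frobNorm Δ ^ 2 + frobNorm H ^ 2)
    (hinv : IsUnit (Hᵀ * H))
    (lam : ℝ) (hlam : lam = η * (frobNorm Δ ^ 2 + frobNorm H ^ 2))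
    (τnon τreg : Fin m → ℝ)
    (hτnon : τnon = (Hᵀ * H)⁻¹ *ᵥ (Hᵀ *ᵥ e))
    (hτreg : τreg = (Hᵀ * H + lam • (1 : Matrix (Fin m) (Fin m) ℝ))⁻¹ *ᵥ (Hᵀ *ᵥ e))
    (αnon αreg : Fin (m + 1) → ℝ)
    (hαnon : αnon = Amat m *ᵥ Fin.cons (1 : ℝ) τnon)
    (hαreg : αreg = Amat m *ᵥ Fin.cons (1 : ℝ) τreg) :
    ∑ i, (αreg i - αnon i) ^ 2 ≤
      (specNorm (Amat m) * specNorm (Amat m)⁻¹) ^ 2 * (∑ i, αnon i ^ 2)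
        - (2 * (m : ℝ) + 1) / ((m : ℝ) + 1) :=
  stmt_5_general n m H Δ e η hη hpos hinv lam hlam τnon τreg hτnon hτreg αnon αreg hαnon hαreg
end

section
/- Let n ≥ 1 and ω > 0. For all x, y ∈ ℝ^n, |mm_ω(x) − mm_ω(y)| ≤ max_{1 ≤ i ≤ n} |x_i − y_i|, i.e., the MellowMax operator is non-expansive with respect to the sup norm. -/
/-! A monotone map that commutes with adding a constant to every coordinate is non-expansive
for the sup norm: `x ≤ y + c` gives `f x ≤ f y + c`, and symmetrically. MellowMax has both
properties, the second because `exp (ω (xᵢ + c)) = exp (ω xᵢ) exp (ω c)`. -/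

/-- The MellowMax operator `mm_ω(x) = (1/ω) log((1/n) ∑ᵢ exp(ω xᵢ))`. -/
noncomputable def mellowMax (n : ℕ) (ω : ℝ) (x : Fin n → ℝ) : ℝ :=
  (1 / ω) * Real.log ((1 / (n : ℝ)) * ∑ i, Real.exp (ω * x i))

theorem abs_sub_le_of_monotone_of_map_add_const {ι : Type*} {f : (ι → ℝ) → ℝ}
    (hf : Monotone f) (hf_add : ∀ x c, f (fun i => x i + c) = f x + c)
    {x y : ι → ℝ} {c : ℝ} (hxy : ∀ i, |x i - y i| ≤ c) :
    |f x - f y| ≤ c := by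
  have hx : f x ≤ f y + c := by
    rw [← hf_add]
    exact hf fun i => by linarith [(abs_le.mp (hxy i)).2]
  have hy : f y ≤ f x + c := by
    rw [← hf_add]
    exact hf fun i => by linarith [(abs_le.mp (hxy i)).1]
  exact abs_sub_le_iff.mpr ⟨by linarith, by linarith⟩

namespace mellowMax

variable {n : ℕ} {ω : ℝ}

theorem mean_exp_pos (hn : 0 < n) (x : Fin n → ℝ) :
    0 < (1 / (n : ℝ)) * ∑ i, Real.exp (ω * x i) := by
  have : 0 < ∑ i : Fin n, Real.exp (ω * x i) :=
    Finset.sum_pos (fun i _ => Real.exp_pos _) ⟨⟨0, hn⟩, Finset.mem_univ _⟩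
  positivity

theorem monotone (hn : 0 < n) (hω : 0 ≤ ω) : Monotone (mellowMax n ω) := by
  intro x y hxy
  unfold mellowMax
  gcongr
  · exact mean_exp_pos hn x
  · exact hxy _

theorem map_add_const (hn : 0 < n) (hω : ω ≠ 0) (x : Fin n → ℝ) (c : ℝ) :
    mellowMax n ω (fun i => x i + c) = mellowMax n ω x + c := by
  have h_exp : ∀ i, Real.exp (ω * (x i + c)) = Real.exp (ω * x i) * Real.exp (ω * c) := by
    intro i
    rw [← Real.exp_add, mul_add]
  unfold mellowMax
  simp only [h_exp, ← Finset.sum_mul, ← mul_assoc]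
  rw [Real.log_mul (mean_exp_pos hn x).ne' (Real.exp_ne_zero _), Real.log_exp]
  field_simp

end mellowMax

/-- The MellowMax operator is non-expansive with respect to the sup norm:
`|mm_ω(x) - mm_ω(y)| ≤ max_{1 ≤ i ≤ n} |x_i - y_i|`. -/
theorem stmt_7 (n : ℕ) (hn : 1 ≤ n) (ω : ℝ) (hω : 0 < ω) (x y : Fin n → ℝ) :
    |mellowMax n ω x - mellowMax n ω y| ≤
      Finset.univ.sup' (Finset.univ_nonempty_iff.mpr ⟨⟨0, hn⟩⟩)
        (fun i => |x i - y i|) :=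
  abs_sub_le_of_monotone_of_map_add_const (mellowMax.monotone hn hω.le)
    (mellowMax.map_add_const hn hω.ne')
    fun i => Finset.le_sup' (fun i => |x i - y i|) (Finset.mem_univ i)
end

section
/- Let n, m ≥ 1, H ∈ ℝ^{n×m}, e ∈ ℝ^n, and λ > 0, and assume HᵀH is invertible. Set τ_non = (HᵀH)^{-1} Hᵀ e and τ_reg = (HᵀH + λI)^{-1} Hᵀ e. Then ‖τ_reg − τ_non‖₂ ≤ ‖τ_non‖₂. -/
/-!
With `B = HᵀH + λI`, the two normal equations give `B (τ_reg - τ_non) = -λ τ_non`.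
Since `HᵀH` is positive semidefinite,
`‖Bv‖² = ‖HᵀH v‖² + 2λ ⟪v, HᵀH v⟫ + λ² ‖v‖² ≥ λ² ‖v‖²`,
so `λ ‖τ_reg - τ_non‖ ≤ ‖B (τ_reg - τ_non)‖ = λ ‖τ_non‖`.
-/

open Matrix

namespace Matrix

variable {m : Type*} [Fintype m] [DecidableEq m]

lemma PosSemidef.sq_mul_dotProduct_self_le {A : Matrix m m ℝ} (hA : A.PosSemidef) {lam : ℝ}
    (hlam : 0 ≤ lam) (v : m → ℝ) :
    lam ^ 2 * (v ⬝ᵥ v) ≤ ((A + lam • 1) *ᵥ v) ⬝ᵥ ((A + lam • 1) *ᵥ v) := by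
  have hvAv : 0 ≤ v ⬝ᵥ (A *ᵥ v) := by simpa using hA.dotProduct_mulVec_nonneg v
  have hAv : 0 ≤ (A *ᵥ v) ⬝ᵥ (A *ᵥ v) := by simpa using dotProduct_self_star_nonneg (A *ᵥ v)
  have expand : ((A + lam • 1) *ᵥ v) ⬝ᵥ ((A + lam • 1) *ᵥ v)
      = (A *ᵥ v) ⬝ᵥ (A *ᵥ v) + 2 * lam * (v ⬝ᵥ (A *ᵥ v)) + lam ^ 2 * (v ⬝ᵥ v) := by
    simp only [add_mulVec, smul_mulVec, one_mulVec, add_dotProduct, dotProduct_add,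
      smul_dotProduct, dotProduct_smul, smul_eq_mul, dotProduct_comm (A *ᵥ v) v]
    ring
  nlinarith

lemma PosSemidef.dotProduct_self_sub_le_of_mulVec_eq {A : Matrix m m ℝ} (hA : A.PosSemidef)
    {lam : ℝ} (hlam : 0 < lam) {b x y : m → ℝ} (hx : A *ᵥ x = b)
    (hy : (A + lam • 1) *ᵥ y = b) : (y - x) ⬝ᵥ (y - x) ≤ x ⬝ᵥ x := by
  have hdiff : (A + lam • 1) *ᵥ (y - x) = -lam • x := by
    rw [mulVec_sub, hy, add_mulVec, hx, smul_mulVec, one_mulVec, neg_smul]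
    abel
  have key := hA.sq_mul_dotProduct_self_le hlam.le (y - x)
  rw [hdiff, smul_dotProduct, dotProduct_smul, smul_eq_mul, smul_eq_mul] at key
  nlinarith [pow_pos hlam 2]

end Matrix

theorem stmt_16_general (n m : ℕ)
    (H : Matrix (Fin n) (Fin m) ℝ) (e : Fin n → ℝ) (lam : ℝ) (hlam : 0 < lam)
    (hinv : IsUnit (Hᵀ * H))
    (τnon τreg : Fin m → ℝ)
    (hτnon : τnon = (Hᵀ * H)⁻¹ *ᵥ (Hᵀ *ᵥ e))
    (hτreg : τreg = (Hᵀ * H + lam • (1 : Matrix (Fin m) (Fin m) ℝ))⁻¹ *ᵥ (Hᵀ *ᵥ e)) :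
    Real.sqrt (∑ i, (τreg i - τnon i) ^ 2) ≤ Real.sqrt (∑ i, τnon i ^ 2) := by
  have hA : (Hᵀ * H).PosSemidef := by
    simpa only [conjTranspose_eq_transpose_of_trivial] using posSemidef_conjTranspose_mul_self H
  have hB : IsUnit (Hᵀ * H + lam • 1) := (PosDef.posSemidef_add hA (PosDef.one.smul hlam)).isUnit
  have hnon : (Hᵀ * H) *ᵥ τnon = Hᵀ *ᵥ e := by
    rw [hτnon, mulVec_mulVec, mul_nonsing_inv _ ((isUnit_iff_isUnit_det _).1 hinv), one_mulVec]
  have hreg : (Hᵀ * H + lam • 1) *ᵥ τreg = Hᵀ *ᵥ e := by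
    rw [hτreg, mulVec_mulVec, mul_nonsing_inv _ ((isUnit_iff_isUnit_det _).1 hB), one_mulVec]
  apply Real.sqrt_le_sqrt
  simpa only [dotProduct, Pi.sub_apply, sq] using
    hA.dotProduct_self_sub_le_of_mulVec_eq hlam hnon hreg

/-- **Inequality (A11).** The ridge-regularized solution
`τ_reg = (HᵀH + λI)⁻¹ Hᵀ e` deviates from the unregularized least-squares
solution `τ_non = (HᵀH)⁻¹ Hᵀ e` by at most `‖τ_non‖₂`:
`‖τ_reg - τ_non‖₂ ≤ ‖τ_non‖₂`. -/
theorem stmt_16 (n m : ℕ) (hn : 1 ≤ n) (hm : 1 ≤ m)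
    (H : Matrix (Fin n) (Fin m) ℝ) (e : Fin n → ℝ) (lam : ℝ) (hlam : 0 < lam)
    (hinv : IsUnit (Hᵀ * H))
    (τnon τreg : Fin m → ℝ)
    (hτnon : τnon = (Hᵀ * H)⁻¹ *ᵥ (Hᵀ *ᵥ e))
    (hτreg : τreg = (Hᵀ * H + lam • (1 : Matrix (Fin m) (Fin m) ℝ))⁻¹ *ᵥ (Hᵀ *ᵥ e)) :
    Real.sqrt (∑ i, (τreg i - τnon i) ^ 2) ≤ Real.sqrt (∑ i, τnon i ^ 2) :=
  stmt_16_general n m H e lam hlam hinv τnon τreg hτnon hτreg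
end

section
/- Let n ≥ 1, m ≥ 1, k ≥ m+1, let T : ℝ^n → ℝ^n be any map, let α ∈ ℝ^{m+1} with Σ_{i=0}^m α_i = 1, let β ∈ ℝ, and let Q^{(k−1−m)}, …, Q^{(k)} ∈ ℝ^n satisfy Q^{(k)} = (1−β)·Σ_{i=0}^m α_i Q^{(k−1−m+i)} + β·Σ_{i=0}^m α_i T Q^{(k−1−m+i)}. Set τ_i = Σ_{l=0}^{m−i} α_l for i = 0, …, m, e^α = Σ_{i=0}^m α_i (T Q^{(k−1−m+i)} − Q^{(k−1−m+i)}), and e_k = T Q^{(k)} − Q^{(k)}. Then e_k = (1−β)·e^α + Σ_{i=0}^m τ_i·(T Q^{(k−i)} − T Q^{(k−i−1)}). -/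
/-!
Write `x = ∑ αᵢ Q⁽ᵏ⁻¹⁻ᵐ⁺ⁱ⁾` and `y = ∑ αᵢ T Q⁽ᵏ⁻¹⁻ᵐ⁺ⁱ⁾`, so that `Q⁽ᵏ⁾ = (1 - β) x + β y` and
`e^α = y - x`. Then `e_k = (1 - β) e^α + (T Q⁽ᵏ⁾ - y)`, and Abel summation turns `T Q⁽ᵏ⁾ - y`
(using `∑ αᵢ = 1`) into the sum of the differences `T Q⁽ᵏ⁻ⁱ⁾ - T Q⁽ᵏ⁻ⁱ⁻¹⁾` weighted by the tail
sums `τᵢ` of `α`.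
-/

open Finset

section AbelSummation

variable {R M : Type*} [CommRing R] [AddCommGroup M] [Module R M]

theorem sum_range_partialSum_smul_sub (α : ℕ → R) (g : ℕ → M) (N : ℕ) :
    ∑ j ∈ range (N + 1), (∑ l ∈ range (j + 1), α l) • (g (j + 1) - g j)
      = (∑ l ∈ range (N + 1), α l) • g (N + 1) - ∑ j ∈ range (N + 1), α j • g j := by
  induction N with
  | zero => simp [smul_sub]
  | succ N ih =>
    rw [sum_range_succ _ (N + 1), ih, sum_range_succ α (N + 1),
      sum_range_succ (fun j => α j • g j) (N + 1)]
    module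

/-- `m + 1 ≤ k` keeps the indices `k - 1 - m + i` and `k - i - 1` free of truncated subtraction. -/
theorem sum_range_tailSum_smul_sub (α : ℕ → R) (g : ℕ → M) {m k : ℕ} (hk : m + 1 ≤ k) :
    ∑ i ∈ range (m + 1), (∑ l ∈ range (m - i + 1), α l) • (g (k - i) - g (k - i - 1))
      = (∑ l ∈ range (m + 1), α l) • g k - ∑ i ∈ range (m + 1), α i • g (k - 1 - m + i) := by
  obtain ⟨c, rfl⟩ : ∃ c, k = c + m + 1 := ⟨k - (m + 1), by omega⟩
  have hc : c + m + 1 - 1 - m = c := by omega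
  rw [hc, ← sum_range_reflect, show c + m + 1 = c + (m + 1) by omega,
    ← sum_range_partialSum_smul_sub α (fun j => g (c + j))]
  refine sum_congr rfl fun j hj => ?_
  have hj : j ≤ m := Nat.lt_succ_iff.mp (mem_range.mp hj)
  rw [show m + 1 - 1 - j = m - j by omega, show m - (m - j) = j by omega,
    show c + (m + 1) - (m - j) = c + (j + 1) by omega,
    show c + (j + 1) - 1 = c + j by omega]

end AbelSummation

theorem stmt_18_general (n m k : ℕ) (hk : m + 1 ≤ k)
    (T : (Fin n → ℝ) → (Fin n → ℝ)) (Q : ℕ → Fin n → ℝ)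
    (α : ℕ → ℝ) (hα : ∑ i ∈ Finset.range (m + 1), α i = 1) (β : ℝ)
    (hQ : Q k = (1 - β) • ∑ i ∈ Finset.range (m + 1), α i • Q (k - 1 - m + i)
        + β • ∑ i ∈ Finset.range (m + 1), α i • T (Q (k - 1 - m + i)))
    (τ : ℕ → ℝ) (hτ : ∀ i ≤ m, τ i = ∑ l ∈ Finset.range (m - i + 1), α l)
    (eα : Fin n → ℝ)
    (heα : eα = ∑ i ∈ Finset.range (m + 1),
      α i • (T (Q (k - 1 - m + i)) - Q (k - 1 - m + i)))
    (ek : Fin n → ℝ) (hek : ek = T (Q k) - Q k) :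
    ek = (1 - β) • eα
      + ∑ i ∈ Finset.range (m + 1), τ i • (T (Q (k - i)) - T (Q (k - i - 1))) := by
  have htelescope : ∑ i ∈ range (m + 1), τ i • (T (Q (k - i)) - T (Q (k - i - 1)))
      = T (Q k) - ∑ i ∈ range (m + 1), α i • T (Q (k - 1 - m + i)) := by
    rw [sum_congr rfl fun i hi => by rw [hτ i (Nat.lt_succ_iff.mp (mem_range.mp hi))],
      sum_range_tailSum_smul_sub α (fun j => T (Q j)) hk, hα, one_smul]
  rw [htelescope, hek, heα, hQ]
  simp only [smul_sub, sum_sub_distrib]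
  module

/-- Central identity in the proof of Theorem 1: the new fixed-point residual
`e_k = T Q^{(k)} - Q^{(k)}` of the damped Anderson iteration decomposes as
`e_k = (1-β) e^α + ∑_{i=0}^m τ_i (T Q^{(k-i)} - T Q^{(k-i-1)})`. -/
theorem stmt_18 (n m k : ℕ) (hn : 1 ≤ n) (hm : 1 ≤ m) (hk : m + 1 ≤ k)
    (T : (Fin n → ℝ) → (Fin n → ℝ)) (Q : ℕ → Fin n → ℝ)
    (α : ℕ → ℝ) (hα : ∑ i ∈ Finset.range (m + 1), α i = 1) (β : ℝ)
    (hQ : Q k = (1 - β) • ∑ i ∈ Finset.range (m + 1), α i • Q (k - 1 - m + i)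
        + β • ∑ i ∈ Finset.range (m + 1), α i • T (Q (k - 1 - m + i)))
    (τ : ℕ → ℝ) (hτ : ∀ i ≤ m, τ i = ∑ l ∈ Finset.range (m - i + 1), α l)
    (eα : Fin n → ℝ)
    (heα : eα = ∑ i ∈ Finset.range (m + 1),
      α i • (T (Q (k - 1 - m + i)) - Q (k - 1 - m + i)))
    (ek : Fin n → ℝ) (hek : ek = T (Q k) - Q k) :
    ek = (1 - β) • eα
      + ∑ i ∈ Finset.range (m + 1), τ i • (T (Q (k - i)) - T (Q (k - i - 1))) :=
  stmt_18_general n m k hk T Q α hα β hQ τ hτ eα heα ek hek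
end
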